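/- arXiv:1606.02943 — 3 statements merged into one kernel-verified Lean document; each statement's English description precedes it below -/
import Mathlib

section
/- Let G be a subgroup of GL(n, ℂ). Set G^s = { A_s : A ∈ G } and G^u = { A_u : A ∈ G }, where A = A_s A_u is the multiplicative Jordan decomposition. Then the subgroup ⟨G^u⟩ generated by G^u is a normal subgroup of the subgroup ⟨G^s, G^u⟩ generated by G^s ∪ G^u. -/
/-- A matrix is diagonalizable if it is conjugate to a diagonal matrix. -/
def IsDiagonalizable {n : ℕ} (M : Matrix (Fin n) (Fin n) ℂ) : Prop :=
  ∃ P : (Matrix (Fin n) (Fin n) ℂ)ˣ, ∃ d : Fin n → ℂ,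
    (↑P⁻¹ : Matrix (Fin n) (Fin n) ℂ) * M * (↑P : Matrix (Fin n) (Fin n) ℂ) = Matrix.diagonal d

/-- A matrix is unipotent if it is the identity plus a nilpotent matrix. -/
def IsUnipotent {n : ℕ} (M : Matrix (Fin n) (Fin n) ℂ) : Prop :=
  IsNilpotent (M - 1)

/-! The multiplicative Jordan decomposition `A = A_s A_u` is the additive one
`A = A_s + A_s (A_u - 1)` in disguise, hence unique, hence equivariant under conjugation:
`(B A B⁻¹)_u = B A_u B⁻¹`. So `G^u` is stable under conjugation by `G`, i.e. `G` normalizes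
`⟨G^u⟩`; as `A_s = A A_u⁻¹`, every element of `G^s` normalizes `⟨G^u⟩` as well. -/

open Polynomial

theorem Polynomial.aeval_units_conj {R A : Type*} [CommSemiring R] [Semiring A] [Algebra R A]
    (u : Aˣ) (x : A) (p : R[X]) :
    aeval (↑u * x * ↑u⁻¹) p = ↑u * aeval x p * ↑u⁻¹ := by
  induction p using Polynomial.induction_on' with
  | add p q hp hq => simp only [map_add, hp, hq, mul_add, add_mul]
  | monomial k a =>
    rw [aeval_monomial, aeval_monomial, Units.conj_pow, ← mul_assoc, ← mul_assoc,
      Algebra.commutes a (u : A), mul_assoc _ _ (x ^ k)]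

theorem Matrix.aeval_diagonal {R ι : Type*} [CommSemiring R] [Fintype ι] [DecidableEq ι]
    (d : ι → R) (p : R[X]) :
    aeval (Matrix.diagonal d) p = Matrix.diagonal fun i ↦ p.eval (d i) := by
  rw [← Matrix.diagonalAlgHom_apply (R := R), aeval_algHom_apply, aeval_pi_apply]
  simp

namespace Module.End

variable {K V : Type*} [Field K] [PerfectField K] [AddCommGroup V] [Module K V]
  [FiniteDimensional K V]

theorem isSemisimple_mul_unipotent_unique {s₁ u₁ s₂ u₂ : End K V}
    (hs₁ : s₁.IsSemisimple) (hu₁ : IsNilpotent (u₁ - 1)) (hc₁ : Commute s₁ u₁)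
    (hs₂ : s₂.IsSemisimple) (hu₂ : IsNilpotent (u₂ - 1)) (hc₂ : Commute s₂ u₂)
    (h : s₁ * u₁ = s₂ * u₂) : s₁ = s₂ := by
  have hnil {s u : End K V} (hu : IsNilpotent (u - 1)) (hc : Commute s u) :
      IsNilpotent (s * (u - 1)) :=
    (hc.sub_right (Commute.one_right s)).isNilpotent_mul_left hu
  have hcomm {s u : End K V} (hc : Commute s u) : Commute (s * (u - 1)) s :=
    (Commute.refl s).mul_left (hc.sub_right (Commute.one_right s)).symm
  refine (isNilpotent_isSemisimple_unique (hnil hu₁ hc₁) hs₁ (hnil hu₂ hc₂) hs₂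
    (hcomm hc₁) (hcomm hc₂) ?_).2
  simpa only [mul_sub, mul_one, sub_add_cancel] using h

end Module.End

section Matrix

variable {n : ℕ}

local notation "Mat" => Matrix (Fin n) (Fin n) ℂ

theorem IsDiagonalizable.isSemisimple_toLinAlgEquiv' {M : Mat}
    (hM : IsDiagonalizable M) : Module.End.IsSemisimple (Matrix.toLinAlgEquiv' M) := by
  obtain ⟨P, d, hPd⟩ := hM
  have hconj : M = (↑P : Mat) * Matrix.diagonal d * (↑P⁻¹ : Mat) := by
    rw [← hPd]; simp only [mul_assoc, Units.mul_inv, mul_one, Units.mul_inv_cancel_left]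
  let p : ℂ[X] := ∏ c ∈ Finset.univ.image d, (X - C c)
  refine Module.End.isSemisimple_of_squarefree_aeval_eq_zero (p := p)
    (separable_prod_X_sub_C_iff'.mpr fun _ _ _ _ h ↦ h).squarefree ?_
  have hp : ∀ i, p.eval (d i) = 0 := fun i ↦ by
    simp only [p, eval_prod, eval_sub, eval_X, eval_C]
    exact Finset.prod_eq_zero (Finset.mem_image_of_mem d (Finset.mem_univ i)) (sub_self _)
  rw [aeval_algEquiv, AlgHom.comp_apply, hconj, Polynomial.aeval_units_conj,
    Matrix.aeval_diagonal]
  simp [hp]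

theorem IsUnipotent.isNilpotent_toLinAlgEquiv'_sub_one {M : Mat}
    (hM : IsUnipotent M) : IsNilpotent (Matrix.toLinAlgEquiv' M - 1) := by
  simpa only [map_sub, map_one] using hM.map Matrix.toLinAlgEquiv'

theorem IsDiagonalizable.units_conj (B : Matˣ) {M : Mat} (hM : IsDiagonalizable M) :
    IsDiagonalizable ((↑B : Mat) * M * (↑B⁻¹ : Mat)) := by
  obtain ⟨P, d, hPd⟩ := hM
  refine ⟨B * P, d, ?_⟩
  simp only [mul_inv_rev, Units.val_mul, mul_assoc, Units.inv_mul_cancel_left]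
  simpa only [mul_assoc] using hPd

theorem IsUnipotent.units_conj (B : Matˣ) {M : Mat} (hM : IsUnipotent M) :
    IsUnipotent ((↑B : Mat) * M * (↑B⁻¹ : Mat)) := by
  obtain ⟨k, hk⟩ := hM
  refine ⟨k, ?_⟩
  have hsub :
      (↑B : Mat) * M * (↑B⁻¹ : Mat) - 1 = (↑B : Mat) * (M - 1) * (↑B⁻¹ : Mat) := by
    rw [mul_sub, sub_mul, mul_one, Units.mul_inv]
  rw [hsub, Units.conj_pow, hk, mul_zero, zero_mul]

theorem units_semisimple_unipotent_unique {s₁ u₁ s₂ u₂ : Matˣ}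
    (hs₁ : IsDiagonalizable (s₁ : Mat)) (hu₁ : IsUnipotent (u₁ : Mat))
    (hc₁ : Commute s₁ u₁) (hs₂ : IsDiagonalizable (s₂ : Mat)) (hu₂ : IsUnipotent (u₂ : Mat))
    (hc₂ : Commute s₂ u₂)
    (h : s₁ * u₁ = s₂ * u₂) : s₁ = s₂ ∧ u₁ = u₂ := by
  have hs : s₁ = s₂ := Units.ext <| Matrix.toLinAlgEquiv'.injective <|
    Module.End.isSemisimple_mul_unipotent_unique
      hs₁.isSemisimple_toLinAlgEquiv' hu₁.isNilpotent_toLinAlgEquiv'_sub_one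
      (hc₁.units_val.map _)
      hs₂.isSemisimple_toLinAlgEquiv' hu₂.isNilpotent_toLinAlgEquiv'_sub_one
      (hc₂.units_val.map _)
      (by simpa only [Units.val_mul, map_mul] using
        congrArg (fun x : Matˣ ↦ Matrix.toLinAlgEquiv' (x : Mat)) h)
  exact ⟨hs, mul_left_cancel (hs ▸ h)⟩

theorem unipotentPart_conj (js ju : Matˣ → Matˣ)
    (hs : ∀ A, IsDiagonalizable (js A : Mat)) (hu : ∀ A, IsUnipotent (ju A : Mat))
    (hcomm : ∀ A, Commute (js A) (ju A)) (hdec : ∀ A, A = js A * ju A) (B A : Matˣ) :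
    ju (B * A * B⁻¹) = B * ju A * B⁻¹ := by
  have hprod : B * js A * B⁻¹ * (B * ju A * B⁻¹) = B * (js A * ju A) * B⁻¹ := by group
  refine (units_semisimple_unipotent_unique (hs _) (hu _) (hcomm _) ?_ ?_
    ((hcomm A).map (MulAut.conj B)) ?_).2
  · simpa only [MulAut.conj_apply, Units.val_mul] using IsDiagonalizable.units_conj B (hs A)
  · simpa only [MulAut.conj_apply, Units.val_mul] using IsUnipotent.units_conj B (hu A)
  · rw [← hdec, MulAut.conj_apply, MulAut.conj_apply, hprod, ← hdec]

end Matrix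

theorem Subgroup.closure_union_le_normalizer_closure {H : Type*} [Group H] (G : Subgroup H)
    (s u : H → H) (hdec : ∀ A ∈ G, A = s A * u A)
    (hconj : ∀ B ∈ G, ∀ A ∈ G, u (B * A * B⁻¹) = B * u A * B⁻¹) :
    closure ({X | ∃ A ∈ G, X = s A} ∪ {X | ∃ A ∈ G, X = u A}) ≤
      normalizer (closure {X | ∃ A ∈ G, X = u A} : Set H) := by
  have hG : G ≤ normalizer (closure {X | ∃ A ∈ G, X = u A} : Set H) := by
    refine le_normalizer_closure_iff.mpr ?_
    rintro B hB _ ⟨A, hA, rfl⟩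
    exact subset_closure ⟨B * A * B⁻¹, G.mul_mem (G.mul_mem hB hA) (G.inv_mem hB),
      (hconj B hB A hA).symm⟩
  rw [closure_le]
  rintro X (⟨A, hA, rfl⟩ | hX)
  · rw [eq_mul_inv_of_mul_eq (hdec A hA).symm]
    exact mul_mem (hG hA) (inv_mem (le_normalizer (subset_closure ⟨A, hA, rfl⟩)))
  · exact le_normalizer (subset_closure hX)

/-- `js A` and `ju A` are the semisimple and unipotent parts of the (unique) multiplicative
Jordan decomposition of `A`; the hypotheses characterize them. Then `⟨G^u⟩` is a normal
subgroup of `⟨G^s, G^u⟩`. -/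
theorem closure_unipotent_normal_in_closure_ss_unipotent {n : ℕ}
    (js ju : (Matrix (Fin n) (Fin n) ℂ)ˣ → (Matrix (Fin n) (Fin n) ℂ)ˣ)
    (hs : ∀ A, IsDiagonalizable (↑(js A) : Matrix (Fin n) (Fin n) ℂ))
    (hu : ∀ A, IsUnipotent (↑(ju A) : Matrix (Fin n) (Fin n) ℂ))
    (hcomm : ∀ A, js A * ju A = ju A * js A)
    (hdec : ∀ A, A = js A * ju A)
    (G : Subgroup (Matrix (Fin n) (Fin n) ℂ)ˣ) :
    Subgroup.closure {X | ∃ A ∈ G, X = ju A} ≤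
        Subgroup.closure ({X | ∃ A ∈ G, X = js A} ∪ {X | ∃ A ∈ G, X = ju A}) ∧
      ∀ B ∈ Subgroup.closure ({X | ∃ A ∈ G, X = js A} ∪ {X | ∃ A ∈ G, X = ju A}),
        ∀ x ∈ Subgroup.closure {X | ∃ A ∈ G, X = ju A},
          B * x * B⁻¹ ∈ Subgroup.closure {X | ∃ A ∈ G, X = ju A} := by
  have hnorm := Subgroup.closure_union_le_normalizer_closure G js ju (fun A _ ↦ hdec A)
    fun B _ A _ ↦ unipotentPart_conj js ju hs hu hcomm hdec B A
  exact ⟨Subgroup.closure_mono Set.subset_union_right,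
    fun B hB x hx ↦ (Subgroup.mem_normalizer_iff.mp (hnorm hB) x).mp hx⟩
end

section
/- Let T be a topological group, G a subgroup of T, and H a normal subgroup of G of finite index. Then the topological closure of H is a normal subgroup of the topological closure of G, and the index of the closure of H in the closure of G is finite (at most [G : H]). -/
/-!
Conjugation is jointly continuous, so it maps `closure G × closure H` into `closure H`.
For the index: `G * closure H` is a finite union of translates `g • closure H`, one for each
coset of `H` in `G`, hence closed; so it contains `closure G`. Every coset of `closure H` in
`closure G` therefore meets `G`, and `[closure G : closure H] = [G : G ∩ closure H] ≤ [G : H]`.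
-/

open Pointwise

namespace Subgroup

variable {α : Type*} [Group α]

theorem relIndex_eq_of_le_of_subset_mul {G K L : Subgroup α} (hGK : G ≤ K)
    (hK : (K : Set α) ⊆ G * L) : L.relIndex K = L.relIndex G := by
  let f : G ⧸ L.subgroupOf G → K ⧸ L.subgroupOf K :=
    Quotient.map' (inclusion hGK) fun a b hab => by
      rw [QuotientGroup.leftRel_apply, mem_subgroupOf] at hab ⊢
      exact hab
  have hf : Function.Bijective f := by
    constructor
    · rintro ⟨a⟩ ⟨b⟩ hab
      have hab := QuotientGroup.eq.1 hab
      exact QuotientGroup.eq.2 (mem_subgroupOf.2 (mem_subgroupOf.1 hab))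
    · rintro ⟨k⟩
      obtain ⟨g, hg, l, hl, hgl⟩ := hK k.2
      refine ⟨QuotientGroup.mk ⟨g, hg⟩, QuotientGroup.eq.2 ?_⟩
      rw [mem_subgroupOf]
      simpa [← hgl] using hl
  exact (Nat.card_congr (Equiv.ofBijective f hf)).symm

variable {T : Type*} [Group T] [TopologicalSpace T]

theorem conj_mem_topologicalClosure [IsTopologicalGroup T] {G H : Subgroup T}
    (hnorm : ∀ g ∈ G, ∀ h ∈ H, g * h * g⁻¹ ∈ H) :
    ∀ g ∈ G.topologicalClosure, ∀ h ∈ H.topologicalClosure,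
      g * h * g⁻¹ ∈ H.topologicalClosure :=
  fun _ hg _ hh => map_mem_closure₂ (f := fun g h => g * h * g⁻¹) (by fun_prop) hg hh hnorm

theorem isClosed_mul_of_relIndex_ne_zero [ContinuousMul T] {G H L : Subgroup T}
    (hHL : H ≤ L) (hL : IsClosed (L : Set T)) (hfin : H.relIndex G ≠ 0) :
    IsClosed ((G : Set T) * (L : Set T)) := by
  have : (H.subgroupOf G).FiniteIndex := ⟨hfin⟩
  have hunion : (G : Set T) * (L : Set T) =
      ⋃ q : G ⧸ H.subgroupOf G, ((q.out : G) : T) • (L : Set T) := by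
    ext x
    simp only [Set.mem_iUnion, Set.mem_mul, Set.mem_smul_set, smul_eq_mul]
    constructor
    · rintro ⟨g, hg, l, hl, rfl⟩
      obtain ⟨h, hq⟩ := QuotientGroup.mk_out_eq_mul (H.subgroupOf G) ⟨g, hg⟩
      refine ⟨QuotientGroup.mk ⟨g, hg⟩, (h : T)⁻¹ * l, L.mul_mem (L.inv_mem (hHL h.2)) hl, ?_⟩
      rw [hq]
      simp [mul_assoc]
    · rintro ⟨q, l, hl, rfl⟩
      exact ⟨_, (q.out : G).2, l, hl, rfl⟩
  rw [hunion]
  exact isClosed_iUnion_of_finite fun q => hL.smul _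

end Subgroup

theorem closure_of_finite_index_normal {T : Type*} [Group T] [TopologicalSpace T]
    [IsTopologicalGroup T] (G H : Subgroup T) (hHG : H ≤ G)
    (hnorm : ∀ g ∈ G, ∀ h ∈ H, g * h * g⁻¹ ∈ H)
    (hfin : (H.subgroupOf G).index ≠ 0) :
    H.topologicalClosure ≤ G.topologicalClosure ∧
      (∀ g ∈ G.topologicalClosure, ∀ h ∈ H.topologicalClosure,
        g * h * g⁻¹ ∈ H.topologicalClosure) ∧
      (H.topologicalClosure.subgroupOf G.topologicalClosure).index ≠ 0 ∧
      (H.topologicalClosure.subgroupOf G.topologicalClosure).index ≤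
        (H.subgroupOf G).index := by
  have hcover : (G.topologicalClosure : Set T) ⊆ G * H.topologicalClosure :=
    closure_minimal (Set.subset_mul_left _ H.topologicalClosure.one_mem)
      (Subgroup.isClosed_mul_of_relIndex_ne_zero H.le_topologicalClosure
        H.isClosed_topologicalClosure hfin)
  have hindex : H.topologicalClosure.relIndex G.topologicalClosure =
      H.topologicalClosure.relIndex G :=
    Subgroup.relIndex_eq_of_le_of_subset_mul G.le_topologicalClosure hcover
  refine ⟨Subgroup.topologicalClosure_mono hHG, Subgroup.conj_mem_topologicalClosure hnorm, ?_, ?_⟩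
  · rw [← Subgroup.relIndex, hindex]
    exact mt (Subgroup.relIndex_eq_zero_of_le_left H.le_topologicalClosure) hfin
  · rw [← Subgroup.relIndex, hindex]
    exact Subgroup.relIndex_le_of_le_left H.le_topologicalClosure hfin
end

section
/- Every torsion subgroup of the group of invertible upper triangular n×n matrices over ℂ is abelian. -/
/-!
The diagonal is a homomorphism from the invertible upper triangular matrices to a commutative
group, so every commutator `C` is upper triangular with ones on the diagonal. Then `C - 1` has
characteristic polynomial `X ^ n` and is nilpotent by Cayley–Hamilton. If moreover `C ^ m = 1`
and `(C - 1) ^ (j + 2) = 0`, then `(C - 1) ^ j * C ^ m = (C - 1) ^ j + m • (C - 1) ^ (j + 1)`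
forces `(C - 1) ^ (j + 1) = 0` in characteristic zero; descending on `j` gives `C = 1`.
-/

open scoped commutatorElement

section Unipotent

variable {R : Type*} [Ring R]

theorem pow_mul_one_add_pow_of_pow_eq_zero {x : R} {j : ℕ} (hx : x ^ (j + 2) = 0) (m : ℕ) :
    x ^ j * (1 + x) ^ m = x ^ j + m • x ^ (j + 1) := by
  induction m with
  | zero => simp
  | succ m ih =>
    rw [pow_succ, ← mul_assoc, ih]
    simp only [mul_add, add_mul, mul_one, smul_mul_assoc, ← pow_succ, hx, smul_zero, add_zero,
      succ_nsmul]
    abel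

theorem eq_one_of_isNilpotent_sub_one_of_pow_eq_one [IsAddTorsionFree R] {u : R}
    (hu : IsNilpotent (u - 1)) {m : ℕ} (hm : m ≠ 0) (h : u ^ m = 1) : u = 1 := by
  set x := u - 1
  have hux : u = 1 + x := by simp [x]
  suffices ∀ j, x ^ (j + 1) = 0 → x = 0 by
    obtain ⟨k, hk⟩ := hu
    rw [hux, this k (pow_eq_zero_of_le k.le_succ hk), add_zero]
  intro j
  induction j with
  | zero => simp
  | succ j ih =>
    intro hj
    apply ih
    have := pow_mul_one_add_pow_of_pow_eq_zero hj m
    rw [← hux, h, mul_one, left_eq_add, nsmul_eq_zero_iff] at this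
    exact this.resolve_right hm

end Unipotent

theorem Subgroup.commutatorElement_mem {G : Type*} [Group G] (H : Subgroup G) {a b : G}
    (ha : a ∈ H) (hb : b ∈ H) : ⁅a, b⁆ ∈ H := by
  rw [commutatorElement_def]
  exact mul_mem (mul_mem (mul_mem ha hb) (inv_mem ha)) (inv_mem hb)

namespace Matrix

variable {n R : Type*} [Fintype n] [LinearOrder n] [CommRing R]

instance [IsAddTorsionFree R] : IsAddTorsionFree (Matrix n n R) :=
  inferInstanceAs (IsAddTorsionFree (n → n → R))

theorem IsUpperTriangular.diag_mul {M N : Matrix n n R} (hM : M.IsUpperTriangular)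
    (hN : N.IsUpperTriangular) : (M * N).diag = M.diag * N.diag := by
  ext i
  refine (Finset.sum_eq_single i (fun k _ hk => ?_) (by simp)).trans rfl
  rcases hk.lt_or_gt with h | h
  · simp [hM h]
  · simp [hN h]

theorem IsUpperTriangular.isNilpotent_of_diag_eq_zero {N : Matrix n n R}
    (hN : N.IsUpperTriangular) (hd : N.diag = 0) : IsNilpotent N := by
  have hchar : N.charpoly = Polynomial.X ^ Fintype.card n := by
    simp [charpoly_of_isUpperTriangular N hN, show ∀ i, N i i = 0 from congrFun hd]
  exact ⟨_, by simpa [hchar] using aeval_self_charpoly N⟩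

theorem IsUpperTriangular.isNilpotent_sub_one_of_diag_eq_one {U : Matrix n n R}
    (hU : U.IsUpperTriangular) (hd : U.diag = 1) : IsNilpotent (U - 1) :=
  IsUpperTriangular.isNilpotent_of_diag_eq_zero (hU.sub blockTriangular_one) (by simp [hd])

variable (n R) in
def upperTriangularUnits : Subgroup (Matrix n n R)ˣ where
  carrier := {A | (A : Matrix n n R).IsUpperTriangular}
  mul_mem' hA hB := BlockTriangular.mul hA hB
  one_mem' := blockTriangular_one
  inv_mem' {A} hA := by
    let := A.invertible
    rw [Set.mem_ofPred_eq, coe_units_inv]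
    exact blockTriangular_inv_of_blockTriangular hA

namespace upperTriangularUnits

def diagHom : upperTriangularUnits n R →* n → R where
  toFun A := (A : (Matrix n n R)ˣ).val.diag
  map_one' := diag_one
  map_mul' A B := IsUpperTriangular.diag_mul A.2 B.2

variable {A B : (Matrix n n R)ˣ}

theorem diag_commutatorElement (hA : A ∈ upperTriangularUnits n R)
    (hB : B ∈ upperTriangularUnits n R) : (⁅A, B⁆ : (Matrix n n R)ˣ).val.diag = 1 := by
  let A' : upperTriangularUnits n R := ⟨A, hA⟩
  let B' : upperTriangularUnits n R := ⟨B, hB⟩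
  have h := map_commutatorElement diagHom.toHomUnits A' B'
  rw [commutatorElement_eq_one_iff_commute.mpr (Commute.all (diagHom.toHomUnits A') _)] at h
  exact congrArg Units.val h

theorem commute_of_isOfFinOrder_commutatorElement [IsAddTorsionFree R]
    (hA : A ∈ upperTriangularUnits n R) (hB : B ∈ upperTriangularUnits n R)
    (h : IsOfFinOrder ⁅A, B⁆) : Commute A B := by
  obtain ⟨m, hm, hpow⟩ := h.exists_pow_eq_one
  rw [Commute, SemiconjBy, ← commutatorElement_eq_one_iff_mul_comm]
  refine Units.ext (eq_one_of_isNilpotent_sub_one_of_pow_eq_one ?_ hm.ne' ?_)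
  · exact IsUpperTriangular.isNilpotent_sub_one_of_diag_eq_one
      ((upperTriangularUnits n R).commutatorElement_mem hA hB) (diag_commutatorElement hA hB)
  · simpa using congrArg Units.val hpow

end upperTriangularUnits

end Matrix

theorem torsion_triangular_subgroup_abelian {n : ℕ}
    (G : Subgroup (Matrix (Fin n) (Fin n) ℂ)ˣ)
    (htri : ∀ A ∈ G, ∀ i j : Fin n, j < i → (↑A : Matrix (Fin n) (Fin n) ℂ) i j = 0)
    (htor : ∀ A ∈ G, ∃ k : ℕ, 0 < k ∧ A ^ k = 1) :
    ∀ A ∈ G, ∀ B ∈ G, A * B = B * A := by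
  intro A hA B hB
  have hG : G ≤ Matrix.upperTriangularUnits (Fin n) ℂ := fun A hA i j h => htri A hA i j h
  obtain ⟨k, hk, hpow⟩ := htor ⁅A, B⁆ (G.commutatorElement_mem hA hB)
  exact Matrix.upperTriangularUnits.commute_of_isOfFinOrder_commutatorElement (hG hA) (hG hB)
    (isOfFinOrder_iff_pow_eq_one.mpr ⟨k, hk, hpow⟩)
end
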